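/- arXiv:1806.06537 — 12 statements merged into one kernel-verified Lean document; each statement's English description precedes it below -/
import Mathlib

section
/- Let f : Aⁿ → A be a decomposition operator on an algebra A, i.e., f(x,...,x) = x, f(f(x₁₁,...,x₁ₙ),...,f(xₙ₁,...,xₙₙ)) = f(x₁₁,x₂₂,...,xₙₙ), and f is a homomorphism from Aⁿ to A. Then the relations θᵢ defined by a θᵢ b iff f(a,...,a,b,a,...,a) = a (with b in position i) form a family of n complementary factor congruences on A. -/
/-- An algebraic signature: a type of operation symbols with arities. -/
structure Signature where
  ops : Type
  ar : ops → ℕ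

/-- A binary relation is a congruence of the algebra `(A, interp)` if it is an
equivalence relation compatible with every basic operation. -/
def IsCongruence {S : Signature} {A : Type} (interp : ∀ o : S.ops, (Fin (S.ar o) → A) → A)
    (r : A → A → Prop) : Prop :=
  Equivalence r ∧ ∀ (o : S.ops) (x y : Fin (S.ar o) → A),
    (∀ i, r (x i) (y i)) → r (interp o x) (interp o y)

/-- An `n`-ary decomposition operator on the algebra `(A, interp)`:
(D1) `f(x,…,x) = x`; (D2) `f(f(x₁₁,…,x₁ₙ),…,f(xₙ₁,…,xₙₙ)) = f(x₁₁,x₂₂,…,xₙₙ)`;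
(D3) `f` is a homomorphism from `Aⁿ` to `A`. -/
def IsDecompOp {S : Signature} {A : Type} (interp : ∀ o : S.ops, (Fin (S.ar o) → A) → A)
    (n : ℕ) (f : (Fin n → A) → A) : Prop :=
  (∀ x : A, f (fun _ => x) = x) ∧
  (∀ m : Fin n → Fin n → A, f (fun i => f (m i)) = f (fun i => m i i)) ∧
  (∀ (o : S.ops) (x : Fin (S.ar o) → Fin n → A),
      f (fun i => interp o (fun j => x j i)) = interp o (fun j => f (x j)))

/-- The relations `θᵢ` induced by a decomposition operator `f`, defined by
`a θᵢ b` iff `f(a,…,a,b,a,…,a) = a` (with `b` in position `i`), form a family of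
`n` complementary factor congruences: each `θᵢ` is a congruence, `⋂ᵢ θᵢ = Δ`, and
every `n`-tuple has a common "patch" element `u` with `aᵢ θᵢ u` for all `i`. -/
theorem decompOp_induces_complementary_factor_congruences
    {S : Signature} {A : Type} (interp : ∀ o : S.ops, (Fin (S.ar o) → A) → A)
    (n : ℕ) (f : (Fin n → A) → A) (hf : IsDecompOp interp n f)
    (θ : Fin n → A → A → Prop)
    (hθ : ∀ (i : Fin n) (a b : A),
      θ i a b ↔ f (Function.update (fun _ => a) i b) = a) :
    (∀ i, IsCongruence interp (θ i)) ∧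
    (∀ a b : A, (∀ i, θ i a b) ↔ a = b) ∧
    (∀ v : Fin n → A, ∃ u : A, ∀ i, θ i (v i) u) := by
  obtain ⟨h1, h2, h3⟩ := hf
  -- key1 : e i (e i a b) c = e i a c
  have key1 : ∀ (i : Fin n) (a b c : A),
      f (Function.update (fun _ => f (Function.update (fun _ => a) i b)) i c)
        = f (Function.update (fun _ => a) i c) := by
    intro i a b c
    have h := h2 (Function.update (fun _ => Function.update (fun _ => a) i b) i (fun _ => c))
    have e1 : (fun j => f ((Function.update (fun _ => Function.update (fun _ => a) i b) i (fun _ => c)) j))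
        = Function.update (fun _ => f (Function.update (fun _ => a) i b)) i c := by
      funext j
      by_cases hj : j = i
      · subst hj; simp [h1]
      · simp [Function.update_of_ne hj]
    have e2 : (fun j => (Function.update (fun _ => Function.update (fun _ => a) i b) i (fun _ => c)) j j)
        = Function.update (fun _ => a) i c := by
      funext j
      by_cases hj : j = i
      · subst hj; simp
      · simp [Function.update_of_ne hj]
    rw [e1, e2] at h
    exact h
  -- key2 : e i a (e i b c) = e i a c
  have key2 : ∀ (i : Fin n) (a b c : A),
      f (Function.update (fun _ => a) i (f (Function.update (fun _ => b) i c)))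
        = f (Function.update (fun _ => a) i c) := by
    intro i a b c
    have h := h2 (Function.update (fun _ => (fun _ => a)) i (Function.update (fun _ => b) i c))
    have e1 : (fun j => f ((Function.update (fun _ => (fun _ => a)) i (Function.update (fun _ => b) i c)) j))
        = Function.update (fun _ => a) i (f (Function.update (fun _ => b) i c)) := by
      funext j
      by_cases hj : j = i
      · subst hj; simp
      · simp [Function.update_of_ne hj, h1]
    have e2 : (fun j => (Function.update (fun _ => (fun _ => a)) i (Function.update (fun _ => b) i c)) j j)
        = Function.update (fun _ => a) i c := by
      funext j
      by_cases hj : j = i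
      · subst hj; simp
      · simp [Function.update_of_ne hj]
    rw [e1, e2] at h
    exact h
  refine ⟨?_, ?_, ?_⟩
  · -- each θ i is a congruence
    intro i
    constructor
    · constructor
      · intro a
        rw [hθ]
        simpa using h1 a
      · intro a b hab
        rw [hθ] at hab ⊢
        have : f (Function.update (fun _ => b) i (f (Function.update (fun _ => a) i b)))
            = f (Function.update (fun _ => b) i b) := key2 i b a b
        rw [hab] at this
        simpa [h1] using this
      · intro a b c hab hbc
        rw [hθ] at hab hbc ⊢
        have : f (Function.update (fun _ => a) i (f (Function.update (fun _ => b) i c)))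
            = f (Function.update (fun _ => a) i c) := key2 i a b c
        rw [hbc, hab] at this
        exact this.symm
    · intro o x y hxy
      rw [hθ]
      have h := h3 o (fun j => Function.update (fun _ => x j) i (y j))
      have e1 : (fun k => interp o (fun j => (Function.update (fun _ => x j) i (y j)) k))
          = Function.update (fun _ => interp o x) i (interp o y) := by
        funext k
        by_cases hk : k = i
        · subst hk; simp
        · simp [Function.update_of_ne hk]
      have e2 : (fun j => f (Function.update (fun _ => x j) i (y j))) = x := by
        funext j
        exact (hθ i (x j) (y j)).1 (hxy j)
      rw [e1, e2] at h
      exact h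
  · -- intersection is the diagonal
    intro a b
    constructor
    · intro hab
      have h := h2 (fun j => Function.update (fun _ => a) j b)
      have e1 : (fun j => f (Function.update (fun _ => a) j b)) = (fun _ : Fin n => a) := by
        funext j
        exact (hθ j a b).1 (hab j)
      have e2 : (fun j : Fin n => (Function.update (fun _ => a) j b) j) = (fun _ : Fin n => b) := by
        funext j; simp
      rw [e1, e2, h1, h1] at h
      exact h
    · intro h
      subst h
      intro i
      rw [hθ]
      simpa using h1 a
  · -- patching
    intro v
    refine ⟨f v, fun i => ?_⟩
    rw [hθ]
    have h := h2 (Function.update (fun _ => (fun _ => v i)) i v)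
    have e1 : (fun j => f ((Function.update (fun _ => (fun _ => v i)) i v) j))
        = Function.update (fun _ => v i) i (f v) := by
      funext j
      by_cases hj : j = i
      · subst hj; simp
      · simp [Function.update_of_ne hj, h1]
    have e2 : (fun j => (Function.update (fun _ => (fun _ => v i)) i v) j j)
        = (fun _ : Fin n => v i) := by
      funext j
      by_cases hj : j = i
      · subst hj; simp
      · simp [Function.update_of_ne hj]
    rw [e1, e2, h1] at h
    exact h
end

section
/- In the free R-semimodule V over a set E, and for a finite subset I = {e₁,...,eₙ} ⊆ E with the operation q_I(v, w¹,...,wⁿ) = Σᵢ v_{eᵢ} wⁱ, a vector a = Σ_{d∈E} a_d d is I-central (i.e., satisfies the n-central element axioms B1–B3 for q_I with constants e₁,...,eₙ) if and only if: (i) a_d = 0 for d ∉ I; (ii) a_{e₁} + ... + a_{eₙ} = 1; (iii) each a_{eᵢ} commutes with every element of R; (iv) a_{eᵢ} a_{eⱼ} = 0 for i ≠ j and a_{eᵢ} a_{eᵢ} = a_{eᵢ}. -/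
open Finset

/-- The generalised if-then-else on the free `R`-semimodule `E →₀ R`, relative to the
finite subset `I = {e 0, …, e (n-1)} ⊆ E`:
`q_I(v, w¹, …, wⁿ) = ∑ᵢ v_{eᵢ} • wⁱ`. -/
noncomputable def qop {R E : Type} [Semiring R] {n : ℕ} (e : Fin n → E)
    (v : E →₀ R) (w : Fin n → (E →₀ R)) : E →₀ R :=
  ∑ i : Fin n, v (e i) • w i

/-- `a` is `I`-central in the free `R`-semimodule over `E`: it satisfies the
central-element axioms (B1)-(B3) for the operation `q_I` with constants
`e₁, …, eₙ` (the basis vectors), where (B3) is required for the module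
operations (addition and scalar multiplication) and for every operation `q_J`
(`J` a finite subset of `E`, given by an injective tuple `d`). -/
noncomputable def ICentral {R E : Type} [Semiring R] {n : ℕ} (e : Fin n → E)
    (a : E →₀ R) : Prop :=
  -- B1
  qop e a (fun i => Finsupp.single (e i) 1) = a ∧
  -- B2
  (∀ x : E →₀ R, qop e a (fun _ => x) = x) ∧
  -- B3 for addition
  (∀ w u : Fin n → E →₀ R, qop e a (fun i => w i + u i) = qop e a w + qop e a u) ∧
  -- B3 for scalar multiplication
  (∀ (r : R) (w : Fin n → E →₀ R), qop e a (fun i => r • w i) = r • qop e a w) ∧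
  -- B3 for every operation q_J
  (∀ (k : ℕ) (d : Fin k → E), Function.Injective d →
    ∀ (c : Fin n → E →₀ R) (Y : Fin n → Fin k → E →₀ R),
      qop e a (fun i => qop d (c i) (Y i)) =
        qop d (qop e a c) (fun j => qop e a (fun i => Y i j)))

/-!
Each axiom is tested on basis vectors: (B1) pins down the support of `a`, (B2) the sum of its
coordinates, (B3) for scalar multiplication the centrality of the `a_{eᵢ}`, and (B3) for `q_I`
itself, on a suitable tuple of basis vectors, gives `a_{eⱼ} a_{eᵢ} = δᵢⱼ a_{eᵢ}`. Conversely, for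
central orthogonal idempotents `a_{eᵢ'} u a_{eᵢ} v = a_{eᵢ'} a_{eᵢ} u v`, so only the diagonal
terms survive when both sides of (B3) for any `q_J` are expanded coordinatewise.
-/

section qop

variable {R E : Type} [Semiring R] {n : ℕ} (e : Fin n → E) (a : E →₀ R)

lemma qop_apply (w : Fin n → E →₀ R) (x : E) :
    qop e a w x = ∑ i, a (e i) * w i x := by
  simp [qop, Finsupp.finsetSum_apply]

lemma qop_basis_apply (he : Function.Injective e) (j : Fin n) :
    qop e a (fun i => Finsupp.single (e i) 1) (e j) = a (e j) := by
  rw [qop_apply, Finset.sum_eq_single j]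
  · rw [Finsupp.single_eq_same, mul_one]
  · intro i _ hij
    rw [Finsupp.single_eq_of_ne' (he.ne hij), mul_zero]
  · exact fun h => absurd (Finset.mem_univ j) h

lemma qop_basis_eq_self_iff (he : Function.Injective e) :
    qop e a (fun i => Finsupp.single (e i) 1) = a ↔ ∀ d ∉ Set.range e, a d = 0 := by
  constructor
  · intro h d hd
    rw [← h, qop_apply]
    exact Finset.sum_eq_zero fun i _ => by
      rw [Finsupp.single_eq_of_ne' fun h => hd ⟨i, h⟩, mul_zero]
  · intro h
    ext x
    by_cases hx : x ∈ Set.range e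
    · obtain ⟨j, rfl⟩ := hx
      exact qop_basis_apply e a he j
    · rw [h x hx, qop_apply]
      exact Finset.sum_eq_zero fun i _ => by
        rw [Finsupp.single_eq_of_ne' fun h => hx ⟨i, h⟩, mul_zero]

lemma qop_const (x : E →₀ R) : qop e a (fun _ => x) = (∑ i, a (e i)) • x := by
  rw [qop, Finset.sum_smul]

lemma qop_const_eq_self_iff [Nonempty E] :
    (∀ x : E →₀ R, qop e a (fun _ => x) = x) ↔ ∑ i, a (e i) = 1 := by
  refine ⟨fun h => ?_, fun h x => by rw [qop_const, h, one_smul]⟩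
  obtain ⟨d⟩ := ‹Nonempty E›
  simpa [qop_const] using DFunLike.congr_fun (h (Finsupp.single d 1)) d

lemma qop_add_right (w u : Fin n → E →₀ R) :
    qop e a (fun i => w i + u i) = qop e a w + qop e a u := by
  simp only [qop, smul_add, Finset.sum_add_distrib]

lemma qop_smul_right_iff :
    (∀ (r : R) (w : Fin n → E →₀ R), qop e a (fun i => r • w i) = r • qop e a w) ↔
      ∀ (i : Fin n) (r : R), a (e i) * r = r * a (e i) := by
  constructor
  · intro h i r
    have := DFunLike.congr_fun (h r (Pi.single i (Finsupp.single (e i) 1))) (e i)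
    simpa [qop_apply, Pi.single_apply, apply_ite (fun g : E →₀ R => g (e i))] using this
  · intro h r w
    rw [qop, qop, Finset.smul_sum]
    refine Finset.sum_congr rfl fun i _ => ?_
    rw [smul_smul, h i r, ← smul_smul]

lemma mul_apply_eq_ite_of_qop_qop (he : Function.Injective e)
    (h : ∀ (c : Fin n → E →₀ R) (Y : Fin n → Fin n → E →₀ R),
      qop e a (fun i => qop e (c i) (Y i)) = qop e (qop e a c) (fun j => qop e a fun i => Y i j))
    (i j : Fin n) : a (e j) * a (e i) = if i = j then a (e i) else 0 := by
  have := DFunLike.congr_fun (h (fun i => Finsupp.single (e i) 1)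
    (fun i' j' => if i' = i ∧ j' = j then Finsupp.single (e i) 1 else 0)) (e i)
  simp only [ite_and, qop_apply, apply_ite (fun g : E →₀ R => g (e i)), Finsupp.single_eq_same,
    Finsupp.coe_zero, Pi.zero_apply, mul_ite, mul_one, mul_zero, sum_ite_irrel, sum_ite_eq',
    mem_univ, ↓reduceIte, sum_const_zero] at this
  rw [← qop_apply, qop_basis_apply e a he] at this
  rw [← this]
  split_ifs with hij
  · rw [hij, Finsupp.single_eq_same, mul_one]
  · rw [Finsupp.single_eq_of_ne' (he.ne hij), mul_zero]

lemma qop_qop_of_orthogonal_idempotent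
    (hcomm : ∀ (i : Fin n) (r : R), a (e i) * r = r * a (e i))
    (horth : ∀ i j : Fin n, i ≠ j → a (e i) * a (e j) = 0)
    (hid : ∀ i : Fin n, a (e i) * a (e i) = a (e i))
    {k : ℕ} (d : Fin k → E) (c : Fin n → E →₀ R) (Y : Fin n → Fin k → E →₀ R) :
    qop e a (fun i => qop d (c i) (Y i)) = qop d (qop e a c) (fun j => qop e a fun i => Y i j) := by
  have hmul : ∀ (i i' : Fin n) (u v : R),
      a (e i') * u * (a (e i) * v) = a (e i') * a (e i) * (u * v) := by
    intro i i' u v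
    rw [mul_assoc, ← mul_assoc u, ← hcomm i u, mul_assoc, ← mul_assoc]
  ext x
  simp only [qop_apply, Finset.sum_mul, Finset.mul_sum]
  rw [Finset.sum_comm]
  refine Finset.sum_congr rfl fun j _ => ?_
  rw [Finset.sum_comm]
  refine Finset.sum_congr rfl fun i _ => ?_
  rw [Finset.sum_eq_single i]
  · rw [hmul, hid]
  · intro i' _ hi'
    rw [hmul, horth i i' (Ne.symm hi'), zero_mul]
  · exact fun h => absurd (Finset.mem_univ i) h

end qop

/-- A vector `a = ∑_{d ∈ E} a_d d` of the free `R`-semimodule on `E` is `I`-central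
(for a nonempty finite subset `I = {e₁,…,eₙ} ⊆ E`) iff:
(i) `a_d = 0` for `d ∉ I`; (ii) `a_{e₁} + ⋯ + a_{eₙ} = 1`;
(iii) each `a_{eᵢ}` commutes with every element of `R`;
(iv) the `a_{eᵢ}` are orthogonal idempotents. -/
theorem iCentral_iff {R E : Type} [Semiring R] {n : ℕ} (hn : 0 < n)
    (e : Fin n → E) (he : Function.Injective e) (a : E →₀ R) :
    ICentral e a ↔
      ((∀ d : E, d ∉ Set.range e → a d = 0) ∧
       (∑ i : Fin n, a (e i)) = 1 ∧
       (∀ (i : Fin n) (r : R), a (e i) * r = r * a (e i)) ∧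
       (∀ i j : Fin n, i ≠ j → a (e i) * a (e j) = 0) ∧
       (∀ i : Fin n, a (e i) * a (e i) = a (e i))) := by
  have hE : Nonempty E := ⟨e ⟨0, hn⟩⟩
  constructor
  · rintro ⟨hbasis, hconst, -, hsmul, hqop⟩
    have hmul := mul_apply_eq_ite_of_qop_qop e a he (hqop n e he)
    exact ⟨(qop_basis_eq_self_iff e a he).1 hbasis, (qop_const_eq_self_iff e a).1 hconst,
      (qop_smul_right_iff e a).1 hsmul, fun i j hij => by simpa [Ne.symm hij] using hmul j i,
      fun i => by simpa using hmul i i⟩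
  · rintro ⟨hsupp, hsum, hcomm, horth, hid⟩
    exact ⟨(qop_basis_eq_self_iff e a he).2 hsupp, (qop_const_eq_self_iff e a).2 hsum,
      qop_add_right e a, (qop_smul_right_iff e a).2 hcomm,
      fun _ d _ => qop_qop_of_orthogonal_idempotent e a hcomm horth hid d⟩
end

section
/- An n-dimensional Boolean-like algebra (nBA) A is subdirectly irreducible if and only if its cardinality is exactly n. In particular, every nBA of cardinality n is simple. -/
/-- A Boolean-like algebra of dimension `n` (`nBA`) of signature `S`: an algebra with
constants `e₁,…,eₙ` and an `(n+1)`-ary operation `q` with `q(eᵢ,x₁,…,xₙ) = xᵢ`, in which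
every element `c` is `n`-central, i.e. satisfies (B1) `q(c,e₁,…,eₙ) = c`,
(B2) `q(c,x,…,x) = x`, and (B3) `q(c,-)` commutes with every basic operation,
including `q` itself. -/
structure NBA (S : Signature) (n : ℕ) where
  A : Type
  op : ∀ o : S.ops, (Fin (S.ar o) → A) → A
  e : Fin n → A
  q : A → (Fin n → A) → A
  q_e : ∀ (i : Fin n) (x : Fin n → A), q (e i) x = x i
  B1 : ∀ c : A, q c e = c
  B2 : ∀ (c x : A), q c (fun _ => x) = x
  B3 : ∀ (c : A) (o : S.ops) (m : Fin n → Fin (S.ar o) → A),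
      q c (fun i => op o (m i)) = op o (fun j => q c (fun i => m i j))
  B3q : ∀ (c : A) (a : Fin n → A) (m : Fin n → Fin n → A),
      q c (fun i => q (a i) (m i)) = q (q c a) (fun j => q c (fun i => m i j))

/-- Congruences of an `nBA`: equivalence relations compatible with all basic
operations and with `q`. -/
def NBA.IsCong {S : Signature} {n : ℕ} (B : NBA S n) (r : B.A → B.A → Prop) : Prop :=
  Equivalence r ∧
  (∀ (o : S.ops) (x y : Fin (S.ar o) → B.A),
    (∀ i, r (x i) (y i)) → r (B.op o x) (B.op o y)) ∧
  (∀ (a b : B.A) (x y : Fin n → B.A),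
    r a b → (∀ i, r (x i) (y i)) → r (B.q a x) (B.q b y))

/-- Subdirect irreducibility: the congruence lattice has a unique atom, i.e. there is a
smallest congruence strictly above the diagonal. -/
def NBA.SubdirectlyIrreducible {S : Signature} {n : ℕ} (B : NBA S n) : Prop :=
  ∃ μ : B.A → B.A → Prop, B.IsCong μ ∧ μ ≠ Eq ∧
    ∀ θ : B.A → B.A → Prop, B.IsCong θ → θ ≠ Eq → ∀ a b, μ a b → θ a b

/-- Simplicity: the only congruences are the diagonal and the full relation. -/
def NBA.Simple {S : Signature} {n : ℕ} (B : NBA S n) : Prop :=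
  ∀ θ : B.A → B.A → Prop, B.IsCong θ → θ = Eq ∨ θ = fun _ _ => True

namespace NBAProof

variable {S : Signature} {n : ℕ} (B : NBA S n)

/-- The diagonal identity. -/
lemma diagE (c : B.A) (m : Fin n → Fin n → B.A) :
    B.q c (fun k => B.q c (m k)) = B.q c (fun k => m k k) := by
  have h1 := B.B3q c (fun _ => c) m
  rw [B.B2 c c] at h1
  have h2 := B.B3q c B.e m
  simp only [B.q_e] at h2
  rw [B.B1] at h2
  exact h1.trans h2.symm

/-- `f B c i a = q(c, e[i := a])`. -/
def f (c : B.A) (i : Fin n) (a : B.A) : B.A := B.q c (Function.update B.e i a)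

lemma fF (c : B.A) (i : Fin n) (v : Fin n → B.A) :
    f B c i (B.q c v) = f B c i (v i) := by
  have h := diagE B c (Function.update (fun k _ => B.e k) i v)
  have l1 : (fun k => B.q c (Function.update (fun k _ => B.e k) i v k)) =
      Function.update B.e i (B.q c v) := by
    funext k; rcases eq_or_ne k i with rfl | hk
    · simp
    · simp [Function.update_of_ne hk, B.B2]
  have l2 : (fun k => Function.update (fun k _ => B.e k) i v k k) =
      Function.update B.e i (v i) := by
    funext k; rcases eq_or_ne k i with rfl | hk
    · simp
    · simp [Function.update_of_ne hk]
  rw [l1, l2] at h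
  exact h

lemma qhom (c : B.A) (i : Fin n) (a : B.A) (x : Fin n → B.A) :
    f B c i (B.q a x) = B.q (f B c i a) (fun j => f B c i (x j)) := by
  have h := B.B3q c (Function.update B.e i a) (Function.update (fun k _ => B.e k) i x)
  have l1 : (fun k => B.q (Function.update B.e i a k)
      (Function.update (fun k _ => B.e k) i x k)) = Function.update B.e i (B.q a x) := by
    funext k; rcases eq_or_ne k i with rfl | hk
    · simp
    · simp [Function.update_of_ne hk, B.q_e]
  have l2 : (fun j => B.q c (fun k => Function.update (fun k _ => B.e k) i x k j)) =
      (fun j => f B c i (x j)) := by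
    funext j
    have : (fun k => Function.update (fun k _ => B.e k) i x k j) =
        Function.update B.e i (x j) := by
      funext k; rcases eq_or_ne k i with rfl | hk
      · simp
      · simp [Function.update_of_ne hk]
    rw [this]; rfl
  rw [l1, l2] at h
  exact h

lemma opcompat (c : B.A) (i : Fin n) (o : S.ops) (x : Fin (S.ar o) → B.A) :
    f B c i (B.op o (fun k => f B c i (x k))) = f B c i (B.op o x) := by
  have h := B.B3 c o (Function.update (fun k _ => B.e k) i x)
  have l2 : (fun j => B.q c (fun k => Function.update (fun k _ => B.e k) i x k j)) =
      (fun j => f B c i (x j)) := by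
    funext j
    have : (fun k => Function.update (fun k _ => B.e k) i x k j) =
        Function.update B.e i (x j) := by
      funext k; rcases eq_or_ne k i with rfl | hk
      · simp
      · simp [Function.update_of_ne hk]
    rw [this]; rfl
  rw [l2] at h
  -- h : B.q c (fun k => B.op o (update (fun k _ => e k) i x k)) = B.op o (fun j => f B c i (x j))
  rw [← h]
  have h2 := fF B c i (fun k => B.op o (Function.update (fun k _ => B.e k) i x k))
  rw [h2]
  simp

lemma intersect (c a b : B.A) (h : ∀ i, f B c i a = f B c i b) : a = b := by
  have key : ∀ z : B.A, B.q c (fun k => f B c k z) = z := by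
    intro z
    have hA := diagE B c (fun k => Function.update B.e k z)
    have : (fun k => Function.update B.e k z k) = fun _ => z := by
      funext k; simp
    rw [this, B.B2] at hA
    exact hA
  have : (fun k => f B c k a) = fun k => f B c k b := funext h
  rw [← key a, ← key b, this]

lemma idem (c : B.A) (i : Fin n) (a : B.A) :
    f B c i (f B c i a) = f B c i a := by
  have h := fF B c i (Function.update B.e i a)
  simp only [Function.update_self] at h
  exact h

lemma eq_e_of_inj (c : B.A) (i : Fin n) (hinj : Function.Injective (f B c i)) :
    c = B.e i := by
  have h1 : f B c i c = c := hinj (idem B c i c)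
  have h2 : f B c i (B.e i) = c := by
    show B.q c (Function.update B.e i (B.e i)) = c
    rw [Function.update_eq_self, B.B1]
  exact (hinj (h2.trans h1.symm)).symm

lemma cong_theta (c : B.A) (i : Fin n) :
    B.IsCong (fun a b => f B c i a = f B c i b) := by
  refine ⟨⟨fun _ => rfl, fun h => h.symm, fun h1 h2 => h1.trans h2⟩, ?_, ?_⟩
  · intro o x y hxy
    have hx := opcompat B c i o x
    have hy := opcompat B c i o y
    have hfun : (fun k => f B c i (x k)) = fun k => f B c i (y k) := funext hxy
    show f B c i (B.op o x) = f B c i (B.op o y)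
    rw [← hx, ← hy, hfun]
  · intro a b x y hab hxy
    show f B c i (B.q a x) = f B c i (B.q b y)
    rw [qhom, qhom, hab]
    congr 1
    funext j
    exact hxy j

lemma e_inj (hab : ∃ a b : B.A, a ≠ b) : Function.Injective B.e := by
  obtain ⟨a, b, hab⟩ := hab
  intro i j hij
  by_contra hne
  apply hab
  have h1 : B.q (B.e j) (fun k => if k = i then a else b) = a := by
    rw [← hij, B.q_e]; simp
  have h2 : B.q (B.e j) (fun k => if k = i then a else b) = b := by
    rw [B.q_e]; simp [Ne.symm hne]
  exact h1.symm.trans h2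

lemma ne_eq_exists {r : B.A → B.A → Prop} (hr : Equivalence r) (hne : r ≠ Eq) :
    ∃ a b, r a b ∧ a ≠ b := by
  by_contra h
  push_neg at h
  apply hne
  funext a b
  exact propext ⟨fun hm => h a b hm, fun he => he ▸ hr.refl a⟩

end NBAProof

/-- An `nBA` is subdirectly irreducible iff its cardinality is exactly `n`.
In particular every `nBA` of cardinality `n` is simple. -/
theorem nBA_subdirectlyIrreducible_iff_card {S : Signature} {n : ℕ} (hn : 2 ≤ n)
    (B : NBA S n) :
    (B.SubdirectlyIrreducible ↔ Nat.card B.A = n) ∧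
      (Nat.card B.A = n → B.Simple) := by
  have key1 : B.SubdirectlyIrreducible → Nat.card B.A = n := by
    rintro ⟨μ, hμc, hμne, hmin⟩
    obtain ⟨a0, b0, hab0, hne0⟩ := NBAProof.ne_eq_exists B hμc.1 hμne
    have esurj : ∀ c : B.A, ∃ i, B.e i = c := by
      intro c
      by_contra hc
      push_neg at hc
      have hall : ∀ i, NBAProof.f B c i a0 = NBAProof.f B c i b0 := by
        intro i
        have hθne : (fun a b => NBAProof.f B c i a = NBAProof.f B c i b) ≠ Eq := by
          intro hEq
          have hinj : Function.Injective (NBAProof.f B c i) := by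
            intro a b h
            have := congrFun (congrFun hEq a) b
            rw [← this]
            exact h
          exact hc i (NBAProof.eq_e_of_inj B c i hinj).symm
        exact hmin _ (NBAProof.cong_theta B c i) hθne a0 b0 hab0
      exact hne0 (NBAProof.intersect B c a0 b0 hall)
    have hbij : Function.Bijective B.e :=
      ⟨NBAProof.e_inj B ⟨a0, b0, hne0⟩, esurj⟩
    exact Nat.card_eq_of_equiv_fin (Equiv.ofBijective _ hbij).symm
  have key2 : Nat.card B.A = n → B.Simple := by
    intro hcard θ hθ
    by_cases hθe : θ = Eq
    · exact Or.inl hθe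
    right
    have hfin : Finite B.A := Nat.finite_of_card_ne_zero (by omega)
    have hnt : Nontrivial B.A := Finite.one_lt_card_iff_nontrivial.mp (by omega)
    obtain ⟨a', b', hab'⟩ := hnt
    have einj : Function.Injective B.e := NBAProof.e_inj B ⟨a', b', hab'⟩
    have hbij : Function.Bijective B.e := by
      rw [Nat.bijective_iff_injective_and_card]
      exact ⟨einj, by simp [hcard]⟩
    obtain ⟨a, b, hab, hne0⟩ := NBAProof.ne_eq_exists B hθ.1 hθe
    obtain ⟨i, hi⟩ := hbij.2 a
    obtain ⟨j, hj⟩ := hbij.2 b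
    have hij : i ≠ j := by
      rintro rfl
      exact hne0 (hi ▸ hj ▸ rfl)
    funext u v
    refine propext ⟨fun _ => trivial, fun _ => ?_⟩
    have hq := hθ.2.2 a b (fun k => if k = i then u else v) (fun k => if k = i then u else v)
      hab (fun k => hθ.1.refl _)
    rw [← hi, ← hj, B.q_e, B.q_e] at hq
    simpa [Ne.symm hij] using hq
  have key3 : Nat.card B.A = n → B.SubdirectlyIrreducible := by
    intro hcard
    refine ⟨fun _ _ => True,
      ⟨⟨fun _ => trivial, fun _ => trivial, fun _ _ => trivial⟩,
        fun _ _ _ _ => trivial, fun _ _ _ _ _ _ => trivial⟩, ?_, ?_⟩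
    · intro h
      have hfin : Finite B.A := Nat.finite_of_card_ne_zero (by omega)
      have hnt : Nontrivial B.A := Finite.one_lt_card_iff_nontrivial.mp (by omega)
      obtain ⟨a, b, hab⟩ := hnt
      have := congrFun (congrFun h a) b
      exact hab (this ▸ trivial)
    · intro θ hθ hθne a b _
      rcases key2 hcard θ hθ with h | h
      · exact absurd h hθne
      · rw [h]
        trivial
  exact ⟨⟨key1, key3⟩, key2⟩
end

section
/- Let A be an algebra of dimension n (with constants e₁,...,eₙ and (n+1)-ary operation q satisfying q(eᵢ,x₁,...,xₙ)=xᵢ). The set of n-central elements of A is closed under q and contains e₁,...,eₙ; hence it forms a subalgebra of the pure reduct (A, q, e₁,...,eₙ). -/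
/-- An algebra of dimension `n`: constants `e₁,…,eₙ` and an `(n+1)`-ary operation `q`
satisfying `q(eᵢ,x₁,…,xₙ) = xᵢ`, besides the basic operations of the signature. -/
structure NDA (S : Signature) (n : ℕ) where
  A : Type
  op : ∀ o : S.ops, (Fin (S.ar o) → A) → A
  e : Fin n → A
  q : A → (Fin n → A) → A
  q_e : ∀ (i : Fin n) (x : Fin n → A), q (e i) x = x i

/-- `c` is an `n`-central element: (B1) `q(c,e₁,…,eₙ) = c`; (B2) `q(c,x,…,x) = x`;
(B3) `q(c,-)` commutes with every basic operation and with `q` itself. -/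
def NDA.IsCentral {S : Signature} {n : ℕ} (B : NDA S n) (c : B.A) : Prop :=
  B.q c B.e = c ∧
  (∀ x : B.A, B.q c (fun _ => x) = x) ∧
  (∀ (o : S.ops) (m : Fin n → Fin (S.ar o) → B.A),
    B.q c (fun i => B.op o (m i)) = B.op o (fun j => B.q c (fun i => m i j))) ∧
  (∀ (a : Fin n → B.A) (m : Fin n → Fin n → B.A),
    B.q c (fun i => B.q (a i) (m i)) = B.q (B.q c a) (fun j => B.q c (fun i => m i j)))

/-!
Each `eᵢ` is central because `q(eᵢ, -)` is the `i`-th projection, and projections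
commute with everything. For a central `a`, clause (B3) for `q` applied to a constant matrix
together with (B2) gives the associativity law `q(q(a,c), y) = q(a, q(c₁,y), …, q(cₙ,y))`.
Thus `q(q(a,c), -)` is the composite of `q(a, -)` with the `q(cᵢ, -)`, and each clause of
centrality for `q(a,c)` follows from the same clause for `a` and for the `cᵢ`.
-/

namespace NDA

variable {S : Signature} {n : ℕ} {B : NDA S n} {c : B.A}

theorem IsCentral.q_self_e (h : B.IsCentral c) : B.q c B.e = c := h.1

theorem IsCentral.q_const (h : B.IsCentral c) (x : B.A) : B.q c (fun _ => x) = x := h.2.1 x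

theorem IsCentral.q_op (h : B.IsCentral c) (o : S.ops) (m : Fin n → Fin (S.ar o) → B.A) :
    B.q c (fun i => B.op o (m i)) = B.op o (fun j => B.q c (fun i => m i j)) := h.2.2.1 o m

theorem IsCentral.q_q (h : B.IsCentral c) (a : Fin n → B.A) (m : Fin n → Fin n → B.A) :
    B.q c (fun i => B.q (a i) (m i)) = B.q (B.q c a) (fun j => B.q c (fun i => m i j)) :=
  h.2.2.2 a m

theorem isCentral_e (B : NDA S n) (i : Fin n) : B.IsCentral (B.e i) := by
  refine ⟨B.q_e i B.e, fun x => B.q_e i _, fun o m => ?_, fun a m => ?_⟩ <;> simp only [B.q_e]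

theorem IsCentral.q_q_assoc (h : B.IsCentral c) (a y : Fin n → B.A) :
    B.q (B.q c a) y = B.q c (fun i => B.q (a i) y) := by
  rw [h.q_q a (fun _ => y)]
  simp only [h.q_const]

theorem IsCentral.q_of_isCentral (ha : B.IsCentral c) {x : Fin n → B.A}
    (hx : ∀ i, B.IsCentral (x i)) : B.IsCentral (B.q c x) := by
  refine ⟨?e, fun y => ?const, fun o m => ?op, fun a m => ?q⟩
  case e => simp only [ha.q_q_assoc, (hx _).q_self_e]
  case const => simp only [ha.q_q_assoc, (hx _).q_const, ha.q_const]
  case op => simp only [ha.q_q_assoc, (hx _).q_op, ha.q_op]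
  case q =>
    calc B.q (B.q c x) (fun i => B.q (a i) (m i))
        = B.q c (fun k => B.q (B.q (x k) a) (fun j => B.q (x k) (fun i => m i j))) := by
          simp only [ha.q_q_assoc, (hx _).q_q]
      _ = B.q (B.q c (fun k => B.q (x k) a))
            (fun j => B.q c (fun k => B.q (x k) (fun i => m i j))) := ha.q_q _ _
      _ = B.q (B.q (B.q c x) a) (fun j => B.q (B.q c x) (fun i => m i j)) := by
          simp only [ha.q_q_assoc]

end NDA

/-- The set of `n`-central elements of an algebra of dimension `n` contains
`e₁,…,eₙ` and is closed under `q`; hence it is a subalgebra of the pure reduct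
`(A, q, e₁,…,eₙ)`. -/
theorem central_elements_subalgebra {S : Signature} {n : ℕ} (B : NDA S n) :
    (∀ i : Fin n, B.IsCentral (B.e i)) ∧
    (∀ (a : B.A) (c : Fin n → B.A),
      B.IsCentral a → (∀ i, B.IsCentral (c i)) → B.IsCentral (B.q a c)) :=
  ⟨B.isCentral_e, fun _ _ ha hc => ha.q_of_isCentral hc⟩
end

section
/- Let A be an n-central element of an n-dimensional algebra (with operation q and constants e₁,...,eₙ). Then for every n×n matrix x of elements, q(c, q(c, x₁), ..., q(c, xₙ)) = q(c, x¹₁, x²₂, ..., xⁿₙ), i.e., nested applications of q with the same central first argument select the diagonal. -/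
namespace NDA

variable {S : Signature} {n : ℕ} (B : NDA S n)

theorem q_q_transpose_eq_q_diag {c : B.A} (hce : B.q c B.e = c)
    (hcomm : ∀ (a : Fin n → B.A) (m : Fin n → Fin n → B.A),
      B.q c (fun i => B.q (a i) (m i)) = B.q (B.q c a) (fun j => B.q c (fun i => m i j)))
    (m : Fin n → Fin n → B.A) :
    B.q c (fun j => B.q c (fun i => m i j)) = B.q c (fun i => m i i) :=
  calc B.q c (fun j => B.q c (fun i => m i j))
      = B.q (B.q c B.e) (fun j => B.q c (fun i => m i j)) := by rw [hce]
    _ = B.q c (fun i => B.q (B.e i) (m i)) := (hcomm B.e m).symm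
    _ = B.q c (fun i => m i i) := by simp only [B.q_e]

end NDA

/-- (B4) For an `n`-central element `c` and any `n×n` matrix `m` of elements,
`q(c, q(c,m₁),…,q(c,mₙ)) = q(c, m¹₁, m²₂, …, mⁿₙ)`: nested applications of `q` with the
same central first argument select the diagonal. -/
theorem central_diagonal {S : Signature} {n : ℕ} (B : NDA S n) (c : B.A)
    (hc : B.IsCentral c) (m : Fin n → Fin n → B.A) :
    B.q c (fun i => B.q c (m i)) = B.q c (fun i => m i i) :=
  B.q_q_transpose_eq_q_diag hc.1 hc.2.2.2 (fun i j => m j i)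
end

section
/- In any semiring R, the set C(R) of elements that are both complemented (there exists s with r+s = 1 and rs = 0) and commuting (rt = tr for all t) forms a Boolean algebra under the operations r ∨ s = r + r′s, r ∧ s = rs, complement r ↦ r′, 0, 1, where r′ is the (unique) complement of r. -/
/-!
Elements of `C(R)` are central, and so are their complements. Hence `r ↦ (r, r′)` identifies
`C(R)` with the pairs `(a, b)` of the commutative semiring `Z(R)` with `a * b = 0` and
`a + b = 1`, which Mathlib already makes a Boolean algebra with join `(a + b * a', b * b')`,
meet `(a * a', b + a * b')` and complement `(b, a)`; transport that structure.
-/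

/-- An element of a semiring is in `C(R)` if it is complemented
(`∃ s, r + s = 1 ∧ r * s = 0`) and commuting (`∀ t, r * t = t * r`). -/
def InC {R : Type} [Semiring R] (r : R) : Prop :=
  (∃ s : R, r + s = 1 ∧ r * s = 0) ∧ (∀ t : R, r * t = t * r)

open Subsemiring

section

variable {R : Type} [Semiring R]

theorem Subsemiring.mem_center_of_add_eq_one_of_mul_eq_zero {r s : R} (hr : r ∈ center R)
    (hadd : r + s = 1) (hmul : r * s = 0) : s ∈ center R := by
  rw [mem_center_iff] at hr ⊢
  intro t
  have hsr : s * r = 0 := by rw [hr, hmul]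
  calc t * s = (r + s) * t * s := by rw [hadd, one_mul]
    _ = s * t * s := by rw [add_mul, add_mul, ← hr, mul_assoc, hmul, mul_zero, zero_add]
    _ = s * t * (r + s) := by
      rw [mul_add, mul_assoc s t r, hr, ← mul_assoc, hsr, zero_mul, zero_add]
    _ = s * t := by rw [hadd, mul_one]

namespace InC

def ofCenterComplPair (p : {p : center R × center R // p.1 * p.2 = 0 ∧ p.1 + p.2 = 1}) :
    {r : R // InC r} :=
  ⟨p.1.1, ⟨p.1.2, congrArg Subtype.val p.2.2, congrArg Subtype.val p.2.1⟩,
    fun t => (mem_center_iff.mp p.1.1.2 t).symm⟩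

theorem ofCenterComplPair_bijective : Function.Bijective (ofCenterComplPair (R := R)) := by
  refine ⟨fun p q h => mul_eq_zero_add_eq_one_ext_left (Subtype.ext (congrArg (·.1) h)), ?_⟩
  rintro ⟨r, ⟨s, hadd, hmul⟩, hr⟩
  have hr_center : r ∈ center R := mem_center_iff.mpr fun t => (hr t).symm
  have hs_center := mem_center_of_add_eq_one_of_mul_eq_zero hr_center hadd hmul
  exact ⟨⟨(⟨r, hr_center⟩, ⟨s, hs_center⟩), Subtype.ext hmul, Subtype.ext hadd⟩, rfl⟩

noncomputable def equivCenterComplPair :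
    {r : R // InC r} ≃ {p : center R × center R // p.1 * p.2 = 0 ∧ p.1 + p.2 = 1} :=
  (Equiv.ofBijective _ ofCenterComplPair_bijective).symm

theorem coe_equivCenterComplPair_fst (a : {r : R // InC r}) :
    ((equivCenterComplPair a).1.1 : R) = a.1 :=
  congrArg Subtype.val ((Equiv.ofBijective _ ofCenterComplPair_bijective).apply_symm_apply a)

end InC

end

/-- In any semiring `R`, the set `C(R)` of complemented commuting elements forms a
Boolean algebra in which meet is multiplication, complement is the (unique) semiring
complement, join is `r ∨ s = r + r′s`, bottom is `0` and top is `1`. -/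
theorem complemented_commuting_boolean_algebra {R : Type} [Semiring R] :
    ∃ B : BooleanAlgebra {r : R // InC r},
      (∀ a b : {r : R // InC r}, (B.inf a b).1 = a.1 * b.1) ∧
      (∀ a b : {r : R // InC r}, (B.sup a b).1 = a.1 + (B.compl a).1 * b.1) ∧
      (∀ a : {r : R // InC r}, a.1 + (B.compl a).1 = 1 ∧ a.1 * (B.compl a).1 = 0) ∧
      (B.bot.1 = (0 : R)) ∧ (B.top.1 = (1 : R)) := by
  let e := InC.equivCenterComplPair (R := R)
  have he := InC.coe_equivCenterComplPair_fst (R := R)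
  refine ⟨e.booleanAlgebra, fun a b => ?_, fun a b => ?_, fun a => ?_, rfl, rfl⟩
  · show ((e a).1.1 * (e b).1.1 : R) = a.1 * b.1
    rw [he, he]
  · show ((e a).1.1 + (e a).1.2 * (e b).1.1 : R) = a.1 + (e a).1.2 * b.1
    rw [he, he]
  · show a.1 + ((e a).1.2 : R) = 1 ∧ a.1 * ((e a).1.2 : R) = 0
    rw [← he]
    exact ⟨congrArg Subtype.val (e a).2.2, congrArg Subtype.val (e a).2.1⟩
end

section
/- Let a₁,...,aₙ be complemented commuting elements of a semiring R. Then (a₁+...+aₙ)(a₁∨...∨aₙ) = a₁+...+aₙ, where ∨ is the join of the Boolean algebra C(R) defined by r ∨ s = r + r′s. Moreover, if aᵢaⱼ = 0 for all i ≠ j, then a₁+...+aₙ = a₁∨...∨aₙ. -/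
/-- Sum `a₁ + ⋯ + aₙ` of a list of pairs `(aᵢ, aᵢ′)` (each element together with its
complement), summing the first components. -/
def sumC {R : Type} [Semiring R] : List (R × R) → R
  | [] => 0
  | p :: l => p.1 + sumC l

/-- Join `a₁ ∨ ⋯ ∨ aₙ` in the Boolean algebra `C(R)` of complemented commuting elements,
where `r ∨ s = r + r′s`, computed on a list of pairs `(aᵢ, aᵢ′)` of elements with their
complements. -/
def joinC {R : Type} [Semiring R] : List (R × R) → R
  | [] => 0
  | p :: l => p.1 + p.2 * joinC l

/-!
Both claims follow by induction on the list, peeling off the first element `a`. An element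
with a complement is idempotent, so if `a` commutes with `s` and `s j = s`, then
`(a + s)(a + a′j) = a + a(a′j) + s(a + a′)j = a + s`. If instead `a s = 0`, then
`s = (a + a′)s = a′s`, so `a + s = a + a′s`.
-/

section Complement

variable {R : Type*} [Semiring R] {a a' : R}

theorem isIdempotentElem_of_add_eq_one_of_mul_eq_zero (h1 : a + a' = 1) (h0 : a * a' = 0) :
    IsIdempotentElem a :=
  calc a * a = a * (a + a') := by rw [mul_add, h0, add_zero]
    _ = a := by rw [h1, mul_one]

theorem mul_eq_self_of_add_eq_one_of_mul_eq_zero (h1 : a + a' = 1) {s : R} (hs : a * s = 0) :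
    a' * s = s :=
  calc a' * s = (a + a') * s := by rw [add_mul, hs, zero_add]
    _ = s := by rw [h1, one_mul]

theorem add_mul_add_mul_eq_self (h1 : a + a' = 1) (h0 : a * a' = 0) {s j : R}
    (hc : Commute a s) (hsj : s * j = s) : (a + s) * (a + a' * j) = a + s := by
  have ha : a * (a + a' * j) = a := by
    rw [mul_add, isIdempotentElem_of_add_eq_one_of_mul_eq_zero h1 h0, ← mul_assoc, h0,
      zero_mul, add_zero]
  have hsa : s * a * j = s * a := by rw [← hc.eq, mul_assoc, hsj]
  have hs : s * (a + a' * j) = s :=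
    calc s * (a + a' * j) = s * a * j + s * a' * j := by rw [hsa, mul_add, mul_assoc]
      _ = s := by rw [← add_mul, ← mul_add, h1, mul_one, hsj]
  rw [add_mul, ha, hs]

end Complement

section Lists

variable {R : Type} [Semiring R]

theorem mul_sumC_eq_zero (a : R) :
    ∀ l : List (R × R), (∀ p ∈ l, a * p.1 = 0) → a * sumC l = 0
  | [], _ => mul_zero a
  | p :: l, h => by
    rw [sumC, mul_add, h p List.mem_cons_self,
      mul_sumC_eq_zero a l fun q hq => h q (List.mem_cons_of_mem p hq), add_zero]

theorem sumC_mul_joinC (l : List (R × R))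
    (h : ∀ p ∈ l, p.1 + p.2 = 1 ∧ p.1 * p.2 = 0 ∧ ∀ t : R, p.1 * t = t * p.1) :
    sumC l * joinC l = sumC l := by
  induction l with
  | nil => exact zero_mul 0
  | cons p l ih =>
    obtain ⟨h1, h0, hc⟩ := h p List.mem_cons_self
    exact add_mul_add_mul_eq_self h1 h0 (hc (sumC l))
      (ih fun q hq => h q (List.mem_cons_of_mem p hq))

theorem sumC_eq_joinC (l : List (R × R)) (h1 : ∀ p ∈ l, p.1 + p.2 = 1)
    (hl : l.Pairwise fun p q => p.1 * q.1 = 0) : sumC l = joinC l := by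
  induction l with
  | nil => rfl
  | cons p l ih =>
    obtain ⟨hp, hl⟩ := List.pairwise_cons.mp hl
    have hs : p.2 * sumC l = sumC l :=
      mul_eq_self_of_add_eq_one_of_mul_eq_zero (h1 p List.mem_cons_self) (mul_sumC_eq_zero _ l hp)
    rw [sumC, joinC, ← hs, ih (fun q hq => h1 q (List.mem_cons_of_mem p hq)) hl]

end Lists

/-- Let `a₁,…,aₙ` be complemented commuting elements of a semiring `R` (each `aᵢ` given
with its complement `aᵢ′`). Then `(a₁+⋯+aₙ)(a₁∨⋯∨aₙ) = a₁+⋯+aₙ`, and if moreover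
`aᵢaⱼ = 0` for all `i ≠ j`, then `a₁+⋯+aₙ = a₁∨⋯∨aₙ`. -/
theorem sum_join_complemented_commuting {R : Type} [Semiring R]
    (l : List (R × R))
    (h : ∀ p ∈ l, p.1 + p.2 = 1 ∧ p.1 * p.2 = 0 ∧ ∀ t : R, p.1 * t = t * p.1) :
    sumC l * joinC l = sumC l ∧
      (l.Pairwise (fun p q => p.1 * q.1 = 0) → sumC l = joinC l) :=
  ⟨sumC_mul_joinC l h, sumC_eq_joinC l fun p hp => (h p hp).1⟩
end

section
/- Let A be an nBA with pure operations q, e₁,...,eₙ, and define p(x,y,z) = q(x,y,z,e₃,...,eₙ). For a ∈ A and x₁,...,xₙ in B_A = {x ∈ A : p(x,y,y) = y for all y}, the element q(a, x₁,...,xₙ) belongs to B_A. -/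
/-- A pure Boolean-like algebra of dimension `n`: a type with constants `e₁,…,eₙ` and an
`(n+1)`-ary operation `q` satisfying `q(eᵢ,x̄) = xᵢ`, in which every element `c` is
`n`-central: (B1) `q(c,e₁,…,eₙ) = c`, (B2) `q(c,x,…,x) = x`, and (B3) `q(c,−)` commutes
with `q` itself. -/
structure PNBA (n : ℕ) where
  A : Type
  e : Fin n → A
  q : A → (Fin n → A) → A
  q_e : ∀ (i : Fin n) (x : Fin n → A), q (e i) x = x i
  B1 : ∀ c : A, q c e = c
  B2 : ∀ (c x : A), q c (fun _ => x) = x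
  B3q : ∀ (c : A) (a : Fin n → A) (m : Fin n → Fin n → A),
      q c (fun i => q (a i) (m i)) = q (q c a) (fun j => q c (fun i => m i j))

/-- The ternary operation `p(x,y,z) = q(x,y,z,e₃,…,eₙ)`. -/
def PNBA.p {n : ℕ} (B : PNBA (n + 2)) (x y z : B.A) : B.A :=
  B.q x (fun i => if i = 0 then y else if i = 1 then z else B.e i)

/-- Membership in `B_A`, the Boolean algebra of `2`-central elements of the `nBA`:
`x ∈ B_A` iff `p(x,y,y) = y` for all `y`. -/
def PNBA.inBA {n : ℕ} (B : PNBA (n + 2)) (x : B.A) : Prop :=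
  ∀ y : B.A, B.p x y y = y

/-- The `i`-th coordinate of an element `a`:
`aᵢ = q(a, e₁,…,e₁, e₂, e₁,…,e₁)` with `e₂` in position `i`. -/
def PNBA.coord {n : ℕ} (B : PNBA (n + 2)) (a : B.A) (i : Fin (n + 2)) : B.A :=
  B.q a (fun k => if k = i then B.e 1 else B.e 0)

/-- For `a ∈ A` and `x₁,…,xₙ ∈ B_A`, the element `q(a, x₁,…,xₙ)` belongs to `B_A`. -/
theorem q_mem_inner_boolean_algebra {n : ℕ} (B : PNBA (n + 2)) (a : B.A)
    (x : Fin (n + 2) → B.A) (hx : ∀ i, B.inBA (x i)) :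
    B.inBA (B.q a x) := by
  intro y
  have h := B.B3q a x (fun _ j => if j = 0 then y else if j = 1 then y else B.e j)
  have hL : ∀ i, B.q (x i) (fun j => if j = 0 then y else if j = 1 then y else B.e j) = y :=
    fun i => hx i y
  simp only [hL, B.B2] at h
  rw [PNBA.p]
  exact h.symm
end

section
/- Let A be an nBA and for a ∈ A and 1 ≤ i ≤ n define the i-th coordinate aᵢ = q(a, e₁,...,e₁, e₂, e₁,...,e₁) with e₂ in position i. If two elements a, b ∈ A have the same coordinates (aᵢ = bᵢ for all i), then a = b. -/
/-! The coordinates of `a` are the images under `q(a, −)` of the unit vectors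
`δᵢ = (e₁,…,e₁,e₂,e₁,…,e₁)`. The term `σ(d) = p(d₁, p(d₂, …, p(dₙ, e₁, eₙ) …, e₂), e₁)` sends `δᵢ`
to `eᵢ`, and `q(a, −)` commutes with `σ` by (B2) and (B3). Hence
`a = q(a, e₁,…,eₙ) = q(a, σ(δ₁),…,σ(δₙ)) = σ(a₁,…,aₙ)`, so `a` is determined by its coordinates. -/

namespace PNBA

variable {n : ℕ} (B : PNBA (n + 2))

@[simp]
lemma p_e_zero (y z : B.A) : B.p (B.e 0) y z = y := by
  simp [PNBA.p, B.q_e]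

@[simp]
lemma p_e_one (y z : B.A) : B.p (B.e 1) y z = z := by
  simp [PNBA.p, B.q_e]

lemma q_p (c : B.A) (x y z : Fin (n + 2) → B.A) :
    B.q c (fun i => B.p (x i) (y i) (z i)) = B.p (B.q c x) (B.q c y) (B.q c z) := by
  unfold PNBA.p
  rw [B.B3q c x]
  congr 1
  funext j
  split_ifs <;> simp only [B.B2]

def select (d : Fin (n + 2) → B.A) (l : List (Fin (n + 2))) : B.A :=
  l.foldr (fun k s => B.p (d k) s (B.e k)) (B.e 0)

@[simp]
lemma select_cons (d : Fin (n + 2) → B.A) (k : Fin (n + 2)) (l : List (Fin (n + 2))) :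
    B.select d (k :: l) = B.p (d k) (B.select d l) (B.e k) := rfl

lemma select_unit {i : Fin (n + 2)} {l : List (Fin (n + 2))} (hi : i ∈ l) :
    B.select (fun k => if i = k then B.e 1 else B.e 0) l = B.e i := by
  induction l with
  | nil => cases hi
  | cons k l ih =>
    by_cases hik : i = k
    · simp [hik]
    · rw [select_cons, if_neg hik, p_e_zero]
      exact ih (List.mem_of_ne_of_mem hik hi)

lemma q_select (c : B.A) (d : Fin (n + 2) → Fin (n + 2) → B.A) (l : List (Fin (n + 2))) :
    B.q c (fun i => B.select (d i) l) = B.select (fun k => B.q c (fun i => d i k)) l := by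
  induction l with
  | nil => exact B.B2 c _
  | cons k l ih => simp only [select_cons, q_p, ih, B.B2]

theorem eq_select_coord (a : B.A) : a = B.select (B.coord a) (List.finRange (n + 2)) :=
  calc a = B.q a B.e := (B.B1 a).symm
    _ = B.q a (fun i => B.select (fun k => if i = k then B.e 1 else B.e 0)
          (List.finRange (n + 2))) := by
        simp only [B.select_unit (List.mem_finRange _)]
    _ = B.select (B.coord a) (List.finRange (n + 2)) := B.q_select a _ _

end PNBA

/-- If two elements of an `nBA` have the same coordinates, then they are equal. -/
theorem eq_of_coord_eq {n : ℕ} (B : PNBA (n + 2)) (a b : B.A)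
    (h : ∀ i : Fin (n + 2), B.coord a i = B.coord b i) : a = b := by
  rw [B.eq_select_coord a, B.eq_select_coord b, funext h]
end

section
/- Let A be an nBA. The coordinates a₁,...,aₙ ∈ B_A of any a ∈ A are fully orthogonal in the Boolean algebra B_A: a₁ ∨ ... ∨ aₙ = 1 and aᵢ ∧ aₖ = 0 for i ≠ k. Moreover, the i-th coordinate of q(a, b¹,...,bⁿ) equals ⋁ⱼ (aⱼ ∧ (bʲ)ᵢ). -/
/-- Join in the Boolean algebra `B_A`: `x ∨ y = p(x, y, e₂)`. -/
def PNBA.join {n : ℕ} (B : PNBA (n + 2)) (x y : B.A) : B.A := B.p x y (B.e 1)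

/-- Meet in the Boolean algebra `B_A`: `x ∧ y = p(x, e₁, y)`. -/
def PNBA.meet {n : ℕ} (B : PNBA (n + 2)) (x y : B.A) : B.A := B.p x (B.e 0) y

/-- Finite join `⋁` in `B_A` of a list, with the bottom `e₁` as unit. -/
def PNBA.bigJoin {n : ℕ} (B : PNBA (n + 2)) (l : List B.A) : B.A :=
  l.foldr B.join (B.e 0)

namespace PNBAaux

variable {n : ℕ} (B : PNBA (n + 2))

lemma fin_one_ne_zero : (1 : Fin (n + 2)) ≠ 0 := by
  simp [Fin.ext_iff]

/-- Pull an inner `q` out: `q (q a u) v = q a (fun k => q (u k) v)`. -/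
lemma L0 (a : B.A) (u v : Fin (n + 2) → B.A) :
    B.q (B.q a u) v = B.q a (fun k => B.q (u k) v) := by
  have h := B.B3q a u (fun _ => v)
  simpa [B.B2] using h.symm

/-- Diagonal lemma. -/
lemma diag (a : B.A) (m : Fin (n + 2) → Fin (n + 2) → B.A) :
    B.q a (fun j => B.q a (m j)) = B.q a (fun j => m j j) := by
  have h1 := B.B3q a (fun _ => a) m
  have h2 := B.B3q a B.e m
  rw [B.B2] at h1
  rw [B.B1] at h2
  simp only [B.q_e] at h2
  rw [h1, ← h2]

/-- `join c` commutes with `q a`. -/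
lemma join_pull (c a : B.A) (g : Fin (n + 2) → B.A) :
    B.join c (B.q a g) = B.q a (fun s => B.join c (g s)) := by
  have h := B.B3q c (fun _ => a)
      (fun t s => if t = 0 then g s else if t = 1 then B.e 1 else B.e t)
  rw [B.B2] at h
  have hl : B.join c (B.q a g) =
      B.q c (fun t => B.q a (fun s => if t = 0 then g s else if t = 1 then B.e 1 else B.e t)) := by
    unfold PNBA.join PNBA.p
    congr 1
    funext t
    split_ifs with h0 h1 <;> simp [B.B2]
  rw [hl, h]
  rfl

/-- `join c e₁ = c`. -/
lemma join_bot (c : B.A) : B.join c (B.e 0) = c := by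
  unfold PNBA.join PNBA.p
  have : (fun i : Fin (n+2) => if i = 0 then B.e 0 else if i = 1 then B.e 1 else B.e i) = B.e := by
    funext i
    split_ifs with h0 h1 <;> simp_all
  rw [this, B.B1]

/-- `meet (coord a j) Y` in explicit form. -/
lemma meet_coord (a Y : B.A) (j : Fin (n + 2)) :
    B.meet (B.coord a j) Y = B.q a (fun s => if s = j then Y else B.e 0) := by
  unfold PNBA.meet PNBA.p PNBA.coord
  rw [L0]
  congr 1
  funext s
  split_ifs with h
  · rw [B.q_e]
    simp [fin_one_ne_zero]
  · rw [B.q_e]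
    simp

/-- The fold lemma: the big join of `q a (c j · δⱼ)` over a nodup list. -/
lemma fold_lem (a : B.A) (c : Fin (n + 2) → B.A) :
    ∀ l : List (Fin (n + 2)), l.Nodup →
      ((l.map (fun j => B.q a (fun k => if k = j then c j else B.e 0))).foldr
          B.join (B.e 0))
        = B.q a (fun k => if k ∈ l then c k else B.e 0) := by
  intro l
  induction l with
  | nil => intro _; simp [B.B2]
  | cons j t ih =>
    intro hnd
    have hj : j ∉ t := (List.nodup_cons.mp hnd).1
    have ht : t.Nodup := (List.nodup_cons.mp hnd).2
    have ihh := ih ht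
    simp only [List.map_cons, List.foldr_cons]
    rw [ihh]
    set g : Fin (n+2) → B.A := fun k => if k ∈ t then c k else B.e 0 with hg
    -- expand the outer join
    have step1 : B.join (B.q a (fun k => if k = j then c j else B.e 0)) (B.q a g)
        = B.q a (fun k => if k = j then B.join (c j) (B.q a g) else B.q a g) := by
      unfold PNBA.join PNBA.p
      rw [L0]
      congr 1
      funext k
      split_ifs with h
      · rfl
      · rw [B.q_e]; simp
    rw [step1]
    have step2 : (fun k => if k = j then B.join (c j) (B.q a g) else B.q a g)
        = fun k => B.q a (fun s => if k = j then B.join (c j) (g s) else g s) := by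
      funext k
      split_ifs with h
      · rw [join_pull]
      · rfl
    rw [step2, diag]
    congr 1
    funext k
    by_cases h : k = j
    · subst h
      simp only [if_pos rfl]
      have : g k = B.e 0 := by simp [hg, hj]
      rw [this, join_bot]
      simp
    · simp [h, hg]

/-- `coord (q a b) i = q a (fun j => coord (b j) i)`. -/
lemma coord_q (a : B.A) (b : Fin (n + 2) → B.A) (i : Fin (n + 2)) :
    B.coord (B.q a b) i = B.q a (fun j => B.coord (b j) i) := by
  unfold PNBA.coord
  have h := B.B3q a b (fun _ k => if k = i then B.e 1 else B.e 0)
  rw [h]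
  congr 1
  funext t
  rw [B.B2]

end PNBAaux

/-- The coordinates `a₁,…,aₙ` of any element `a` of an `nBA` lie in the Boolean algebra
`B_A` and are fully orthogonal there: `a₁ ∨ ⋯ ∨ aₙ = 1` and `aᵢ ∧ aₖ = 0` for `i ≠ k`.
Moreover the `i`-th coordinate of `q(a, b¹,…,bⁿ)` equals `⋁ⱼ (aⱼ ∧ (bʲ)ᵢ)`. -/
theorem coords_orthogonal_and_q_coord {n : ℕ} (B : PNBA (n + 2)) (a : B.A) :
    (∀ i : Fin (n + 2), B.inBA (B.coord a i)) ∧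
    B.bigJoin (List.ofFn (B.coord a)) = B.e 1 ∧
    (∀ i k : Fin (n + 2), i ≠ k → B.meet (B.coord a i) (B.coord a k) = B.e 0) ∧
    (∀ (b : Fin (n + 2) → B.A) (i : Fin (n + 2)),
      B.coord (B.q a b) i =
        B.bigJoin (List.ofFn (fun j => B.meet (B.coord a j) (B.coord (b j) i)))) := by
  open PNBAaux in
  refine ⟨?_, ?_, ?_, ?_⟩
  · -- coordinates are in B_A
    intro i y
    unfold PNBA.p PNBA.coord
    rw [L0]
    have : (fun k => B.q (if k = i then B.e 1 else B.e 0)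
        (fun t : Fin (n+2) => if t = 0 then y else if t = 1 then y else B.e t))
        = fun _ => y := by
      funext k
      split_ifs with h <;> rw [B.q_e] <;> simp [fin_one_ne_zero]
    rw [this, B.B2]
  · -- big join of coordinates is 1
    unfold PNBA.bigJoin
    rw [List.ofFn_eq_map]
    have h := fold_lem B a (fun _ => B.e 1) (List.finRange (n+2)) (List.nodup_finRange _)
    have hc : (B.coord a) = fun j => B.q a (fun k => if k = j then B.e 1 else B.e 0) := rfl
    rw [hc, h]
    simp [List.mem_finRange, B.B2]
  · -- orthogonality
    intro i k hik
    rw [meet_coord]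
    have h1 : (fun s => if s = i then B.coord a k else B.e 0)
        = fun s => B.q a (fun t => if s = i then (if t = k then B.e 1 else B.e 0) else B.e 0) := by
      funext s
      split_ifs with h
      · rfl
      · rw [B.B2]
    rw [h1, diag]
    have h2 : (fun s : Fin (n+2) => if s = i then (if s = k then B.e 1 else B.e 0) else B.e 0)
        = fun _ => B.e 0 := by
      funext s
      split_ifs with h h'
      · exact absurd (h ▸ h') (by simpa [eq_comm] using hik)
      · rfl
      · rfl
    rw [h2, B.B2]
  · -- coordinates of q a b
    intro b i
    unfold PNBA.bigJoin
    rw [List.ofFn_eq_map]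
    have hm : (fun j => B.meet (B.coord a j) (B.coord (b j) i))
        = fun j => B.q a (fun s => if s = j then B.coord (b j) i else B.e 0) := by
      funext j; rw [meet_coord]
    rw [hm]
    have h := fold_lem B a (fun j => B.coord (b j) i) (List.finRange (n+2))
      (List.nodup_finRange _)
    rw [h, coord_q]
    congr 1
    funext k
    simp [List.mem_finRange]
end

section
/- Let A be an nBA and a ∈ B_A (a 2-central element). Then the coordinates of a are a₁ = ¬a, a₂ = a, and aₖ = e₁ (= 0) for 3 ≤ k ≤ n. -/
/-- Negation in the Boolean algebra `B_A`: `¬x = p(x, e₂, e₁)`. -/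
def PNBA.neg {n : ℕ} (B : PNBA (n + 2)) (x : B.A) : B.A := B.p x (B.e 1) (B.e 0)

/-!
Centrality (B3) of `a` makes `q a` commute with every `q b`, so `q (q a b) w = q a (q (bᵢ) w)ᵢ`.
Applied to `b = (e₁, e₁, e₃, …, eₙ)`, for which `q a b = p(a, e₁, e₁) = e₁` when `a ∈ B_A`, this shows
that `q a w = w₁` whenever `w₁ = w₂`. Feeding this into (B3) once more, column by column, shows that
`q a w` depends only on `w₁` and `w₂`. The coordinates of `a` are then read off by comparing
`(e₁, e₂, e₁, …, e₁)` with `(e₁, …, eₙ)` (and (B1)), `(e₂, e₁, e₁, …, e₁)` with `(e₂, e₁, e₃, …, eₙ)`,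
and the remaining coordinate vectors, whose first two entries agree.
-/

namespace PNBA

theorem q_q {n : ℕ} (B : PNBA n) (c : B.A) (b w : Fin n → B.A) :
    B.q (B.q c b) w = B.q c (fun i => B.q (b i) w) := by
  simpa only [B.B2] using (B.B3q c b fun _ => w).symm

variable {n : ℕ} (B : PNBA (n + 2)) {a : B.A}

theorem q_eq_of_inBA (ha : B.inBA a) {w : Fin (n + 2) → B.A} (hw : w 1 = w 0) :
    B.q a w = w 0 :=
  calc B.q a w
      = B.q a (fun i => B.q (if i = 0 then B.e 0 else if i = 1 then B.e 0 else B.e i) w) := by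
        congr 1
        funext i
        split_ifs with h0 h1
        · rw [B.q_e, h0]
        · rw [B.q_e, h1, hw]
        · rw [B.q_e]
    _ = B.q (B.p a (B.e 0) (B.e 0)) w := (B.q_q _ _ _).symm
    _ = w 0 := by rw [ha, B.q_e]

theorem q_congr_of_inBA (ha : B.inBA a) {w w' : Fin (n + 2) → B.A}
    (h0 : w 0 = w' 0) (h1 : w 1 = w' 1) : B.q a w = B.q a w' := by
  -- diagonal `w`, and every column has equal first two entries, `w'ⱼ`
  let m : Fin (n + 2) → Fin (n + 2) → B.A := fun i j => if i = 0 ∨ i = 1 then w' j else w i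
  have hdiag : (fun i => B.q (B.e i) (m i)) = w := by
    funext i
    rw [B.q_e]
    by_cases hi : i = 0 ∨ i = 1
    · rcases hi with rfl | rfl <;> simp [m, h0, h1]
    · simp [m, hi]
  have hcol : (fun j => B.q a (fun i => m i j)) = w' :=
    funext fun j => (B.q_eq_of_inBA ha (by simp [m])).trans (by simp [m])
  simpa only [hdiag, hcol, B.B1] using B.B3q a B.e m

end PNBA

/-- For a `2`-central element `a ∈ B_A` of an `nBA`, the coordinates of `a` are
`a₁ = ¬a`, `a₂ = a`, and `aₖ = e₁ (= 0)` for `3 ≤ k ≤ n`. -/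
theorem coords_of_boolean_element {n : ℕ} (B : PNBA (n + 2)) (a : B.A)
    (ha : B.inBA a) :
    B.coord a 0 = B.neg a ∧
    B.coord a 1 = a ∧
    (∀ k : Fin (n + 2), 2 ≤ (k : ℕ) → B.coord a k = B.e 0) := by
  have h10 : (1 : Fin (n + 2)) ≠ 0 := by simp
  refine ⟨B.q_congr_of_inBA ha (by simp) (by simp [h10]), ?_, fun k hk => ?_⟩
  · exact (B.q_congr_of_inBA ha (by simp [h10.symm]) (by simp)).trans (B.B1 a)
  · have hk0 : (0 : Fin (n + 2)) ≠ k := by simp [Fin.ext_iff]; omega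
    have hk1 : (1 : Fin (n + 2)) ≠ k := by simp [Fin.ext_iff]; omega
    exact (B.q_eq_of_inBA ha (by simp [hk0, hk1])).trans (by simp [hk0])
end

section
/- The term rewriting system on ν_n-terms with rules (h₀) q(eᵢ, x₁,...,xₙ) ↦ xᵢ and (h₁) q(q(x,y₁,...,yₙ), z₁,...,zₙ) ↦ q(x, q(y₁,z₁,...,zₙ),...,q(yₙ,z₁,...,zₙ)) is terminating, and its normal forms are exactly the head normal forms. -/
/-- Terms of the type `ν_n = (q, e₁,…,eₙ)` over countably many variables. -/
inductive Tm (n : ℕ) : Type where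
  | var : ℕ → Tm n
  | const : Fin n → Tm n
  | q : Tm n → (Fin n → Tm n) → Tm n

/-- One-step rewriting with the rules
(h₀) `q(eᵢ, x₁,…,xₙ) ↦ xᵢ` and
(h₁) `q(q(x,ȳ), z̄) ↦ q(x, q(y₁,z̄),…,q(yₙ,z̄))`,
closed under contexts (rewriting in the head and in any argument of `q`). -/
inductive Step {n : ℕ} : Tm n → Tm n → Prop where
  | h0 (i : Fin n) (x : Fin n → Tm n) : Step (.q (.const i) x) (x i)
  | h1 (x : Tm n) (y z : Fin n → Tm n) :
      Step (.q (.q x y) z) (.q x (fun i => .q (y i) z))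
  | head {t t' : Tm n} (x : Fin n → Tm n) : Step t t' → Step (.q t x) (.q t' x)
  | arg {t : Tm n} (x : Fin n → Tm n) (i : Fin n) {u : Tm n} :
      Step (x i) u → Step (.q t x) (.q t (Function.update x i u))

/-- Head normal forms: `t ::= eᵢ | x | q(x, t₁,…,tₙ)` with `x` a variable. -/
inductive IsHnf {n : ℕ} : Tm n → Prop where
  | var (v : ℕ) : IsHnf (.var v)
  | const (i : Fin n) : IsHnf (.const i)
  | q (v : ℕ) (ts : Fin n → Tm n) : (∀ i, IsHnf (ts i)) → IsHnf (.q (.var v) ts)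


/-! Termination is witnessed by the polynomial interpretation `w(x) = w(eᵢ) = 2`,
`w(q(t, x₁,…,xₙ)) = w(t) · (2 + Σ w(xᵢ))`, which is monotone in every argument.
Rule (h₀) discards the factor `2 + Σ w(xᵢ) > w(xᵢ)`, and for (h₁), writing `Y = Σ w(yᵢ)`,
`Z = Σ w(zᵢ)`, the weight drops from `w(x)(2 + Y)(2 + Z)` to `w(x)(2 + Y(2 + Z))`.
A root redex is exactly a `q` whose head is a constant or another `q`, so a term is normal
iff every `q` in it has a variable head. -/

namespace Tm

variable {n : ℕ}

def weight : Tm n → ℕ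
  | .var _ => 2
  | .const _ => 2
  | .q t x => t.weight * (2 + ∑ i, (x i).weight)

lemma weight_pos (t : Tm n) : 0 < t.weight := by
  induction t with
  | var _ | const _ => exact Nat.two_pos
  | q t x ht _ => exact Nat.mul_pos ht (Nat.add_pos_left Nat.two_pos _)

end Tm

lemma Finset.sum_update_lt_sum {ι M : Type*} [Fintype ι] [DecidableEq ι] [AddCommMonoid M]
    [PartialOrder M] [IsOrderedCancelAddMonoid M] (f : ι → M) (i : ι) {b : M} (hb : b < f i) : ∑ j, Function.update f i b j < ∑ j, f j := by
  refine Finset.sum_lt_sum (fun j _ => ?_) ⟨i, Finset.mem_univ i, by simpa using hb⟩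
  rcases eq_or_ne j i with rfl | hj
  · simpa using hb.le
  · simp [hj]

namespace Step

variable {n : ℕ}

open Tm in
lemma weight_lt {t u : Tm n} (h : Step t u) : u.weight < t.weight := by
  induction h with
  | h0 i x =>
    calc (x i).weight < 2 * (2 + (x i).weight) := by omega
      _ ≤ 2 * (2 + ∑ j, (x j).weight) := by
        gcongr
        exact Finset.single_le_sum (f := fun j => (x j).weight) (by simp) (Finset.mem_univ i)
  | h1 x y z =>
    simp only [weight, ← Finset.sum_mul, mul_assoc]
    gcongr
    · exact x.weight_pos
    · rw [add_mul]
      exact Nat.add_lt_add_right (by omega) _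
  | head x _ ih =>
    simp only [weight]
    gcongr
  | @arg t x i u _ ih =>
    simp only [weight]
    have hsum : ∑ j, (Function.update x i u j).weight < ∑ j, (x j).weight := by
      simpa only [Function.apply_update (fun _ => weight)] using
        Finset.sum_update_lt_sum (fun j => (x j).weight) i ih
    have := t.weight_pos
    gcongr

theorem wellFounded_swap : WellFounded (Function.swap (@Step n)) :=
  Subrelation.wf (fun h => weight_lt h) (measure Tm.weight).wf

end Step

namespace IsHnf

variable {n : ℕ}

lemma not_step {t u : Tm n} (ht : IsHnf t) : ¬ Step t u := by
  induction ht generalizing u with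
  | var v => rintro ⟨⟩
  | const i => rintro ⟨⟩
  | q v ts _ ih =>
    rintro (_ | _ | ⟨_, ⟨⟩⟩ | ⟨_, i, hi⟩)
    exact ih i hi

lemma of_forall_not_step {t : Tm n} (ht : ∀ u, ¬ Step t u) : IsHnf t := by
  induction t with
  | var v => exact .var v
  | const i => exact .const i
  | q t x _ ihx =>
    have hargs : ∀ i, IsHnf (x i) := fun i => ihx i fun u hu => ht _ (.arg x i hu)
    cases t with
    | var v => exact .q v x hargs
    | const i => exact absurd (.h0 i x) (ht _)
    | q a b => exact absurd (.h1 a b x) (ht _)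

end IsHnf

/-- The rewriting system `(h₀), (h₁)` is terminating (the converse of `Step` is
well-founded), and its normal forms are exactly the head normal forms. -/
theorem step_terminating_and_nf_iff_hnf {n : ℕ} :
    WellFounded (fun a b : Tm n => Step b a) ∧
    (∀ t : Tm n, (∀ u : Tm n, ¬ Step t u) ↔ IsHnf t) :=
  ⟨Step.wellFounded_swap, fun _ => ⟨IsHnf.of_forall_not_step, fun ht _ => ht.not_step⟩⟩
end
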